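/- arXiv:2506.23483 — 2 statements merged into one kernel-verified Lean document; each statement's English description precedes it below -/
import Mathlib

section
/- Inner-product estimate for the IRMGL update direction: Let u ∈ U satisfy ‖u − u†‖ ≤ ℘, and suppose ‖Au − v^δ‖ > τδ and α_{v^δ}(u) ≥ η. Then the update direction d := α_{v^δ}(u)·A*(Au − v^δ) + β_{v^δ}(u)·Δ_u u satisfies −⟨u − u†, d⟩ ≤ −(η − η₁/τ − ℘·ν₀)·‖Au − v^δ‖². -/
open scoped BigOperators RealInnerProductSpace Classical
open ContinuousLinearMap Filter

noncomputable section

/-- Weight matrix induced by a signal `x` on the image graph. -/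
def wMat {n : ℕ} (g : Fin n → Fin n → ℝ) (σ : ℝ) (x : EuclideanSpace ℝ (Fin n)) :
    Matrix (Fin n) (Fin n) ℝ :=
  Matrix.of fun a b => g a b * Real.exp (-(x a - x b) ^ 2 / σ)

/-- Degree function of the graph induced by `x`. -/
def degFun {n : ℕ} (g : Fin n → Fin n → ℝ) (σ : ℝ) (x : EuclideanSpace ℝ (Fin n))
    (a : Fin n) : ℝ :=
  ∑ b, wMat g σ x a b

/-- Graph Laplacian matrix `Δ_x = D_x − W_x`. -/
def lapMat {n : ℕ} (g : Fin n → Fin n → ℝ) (σ : ℝ) (x : EuclideanSpace ℝ (Fin n)) :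
    Matrix (Fin n) (Fin n) ℝ :=
  Matrix.diagonal (degFun g σ x) - wMat g σ x

/-- Graph Laplacian as a continuous linear map on Euclidean space. -/
def lapCLM {n : ℕ} (g : Fin n → Fin n → ℝ) (σ : ℝ) (x : EuclideanSpace ℝ (Fin n)) :
    EuclideanSpace ℝ (Fin n) →L[ℝ] EuclideanSpace ℝ (Fin n) :=
  LinearMap.toContinuousLinearMap (Matrix.toEuclideanLin (lapMat g σ x))

/-- Adaptive step size `α_w(u)`. -/
def alphaStep {n m : ℕ} (A : EuclideanSpace ℝ (Fin n) →L[ℝ] EuclideanSpace ℝ (Fin m))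
    (η₀ η₁ : ℝ) (w : EuclideanSpace ℝ (Fin m)) (u : EuclideanSpace ℝ (Fin n)) : ℝ :=
  if adjoint A (A u - w) ≠ 0 then
    min (η₀ * ‖A u - w‖ ^ 2 / ‖adjoint A (A u - w)‖ ^ 2) η₁
  else η₁

/-- Adaptive weight `β_w(u)`. -/
def betaStep {n m : ℕ} (g : Fin n → Fin n → ℝ) (σ : ℝ)
    (A : EuclideanSpace ℝ (Fin n) →L[ℝ] EuclideanSpace ℝ (Fin m))
    (ν₀ ν₁ ν₂ : ℝ) (w : EuclideanSpace ℝ (Fin m)) (u : EuclideanSpace ℝ (Fin n)) : ℝ :=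
  if lapCLM g σ u u ≠ 0 then
    min (min (ν₀ * ‖A u - w‖ ^ 2 / ‖lapCLM g σ u u‖) (ν₁ / ‖lapCLM g σ u u‖)) ν₂
  else 0

/-- One step of the IRMGL iteration with data `w`. -/
def irmglStep {n m : ℕ} (g : Fin n → Fin n → ℝ) (σ : ℝ)
    (A : EuclideanSpace ℝ (Fin n) →L[ℝ] EuclideanSpace ℝ (Fin m))
    (η₀ η₁ ν₀ ν₁ ν₂ : ℝ) (w : EuclideanSpace ℝ (Fin m))
    (u : EuclideanSpace ℝ (Fin n)) : EuclideanSpace ℝ (Fin n) :=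
  u - alphaStep A η₀ η₁ w u • adjoint A (A u - w)
    - betaStep g σ A ν₀ ν₁ ν₂ w u • lapCLM g σ u u

/-- The IRMGL iterates with data `w` started at `u₀`. -/
def irmglSeq {n m : ℕ} (g : Fin n → Fin n → ℝ) (σ : ℝ)
    (A : EuclideanSpace ℝ (Fin n) →L[ℝ] EuclideanSpace ℝ (Fin m))
    (η₀ η₁ ν₀ ν₁ ν₂ : ℝ) (w : EuclideanSpace ℝ (Fin m))
    (u₀ : EuclideanSpace ℝ (Fin n)) : ℕ → EuclideanSpace ℝ (Fin n)
  | 0 => u₀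
  | k + 1 => irmglStep g σ A η₀ η₁ ν₀ ν₁ ν₂ w
      (irmglSeq g σ A η₀ η₁ ν₀ ν₁ ν₂ w u₀ k)

end

/-- Inner-product estimate for the IRMGL update direction. -/
theorem stmt18 (n m : ℕ) (g : Fin n → Fin n → ℝ) (σ : ℝ) (hσ : 0 < σ)
    (hgsymm : ∀ a b, g a b = g b a) (hgnn : ∀ a b, 0 ≤ g a b) (hgdiag : ∀ a, g a a = 0)
    (A : EuclideanSpace ℝ (Fin n) →L[ℝ] EuclideanSpace ℝ (Fin m))
    (η₀ η₁ ν₀ ν₁ ν₂ τ p η δ : ℝ)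
    (hη₀ : 0 < η₀) (hη₁ : 0 < η₁) (hν₀ : 0 < ν₀) (hν₁ : 0 < ν₁) (hν₂ : 0 < ν₂)
    (hτ : 1 < τ) (hp : 0 < p) (hηpos : 0 < η) (hδ : 0 ≤ δ)
    (udag : EuclideanSpace ℝ (Fin n)) (v vδ : EuclideanSpace ℝ (Fin m))
    (hsol : A udag = v) (hnoise : ‖vδ - v‖ ≤ δ)
    (u : EuclideanSpace ℝ (Fin n)) (hball : ‖u - udag‖ ≤ p)
    (hres : τ * δ < ‖A u - vδ‖) (hα : η ≤ alphaStep A η₀ η₁ vδ u) :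
    -⟪u - udag, alphaStep A η₀ η₁ vδ u • adjoint A (A u - vδ)
        + betaStep g σ A ν₀ ν₁ ν₂ vδ u • lapCLM g σ u u⟫
      ≤ -(η - η₁ / τ - p * ν₀) * ‖A u - vδ‖ ^ 2 := by

  have hτ0 : (0:ℝ) < τ := lt_trans one_pos hτ
  set α := alphaStep A η₀ η₁ vδ u with hαdef
  set β := betaStep g σ A ν₀ ν₁ ν₂ vδ u with hβdef
  set r := A u - vδ with hrdef
  set L := lapCLM g σ u u with hLdef
  have hrpos : 0 < ‖r‖ := lt_of_le_of_lt (by positivity) hres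
  have hαle : α ≤ η₁ := by
    rw [hαdef, alphaStep]; split
    · exact min_le_right _ _
    · exact le_refl _
  have hβnn : 0 ≤ β := by
    rw [hβdef, betaStep]; split
    · exact le_min (le_min (by positivity) (by positivity)) hν₂.le
    · exact le_refl _
  have hβL : β * ‖L‖ ≤ ν₀ * ‖r‖ ^ 2 := by
    rw [hβdef, betaStep]; split
    · rename_i h
      have hL : 0 < ‖L‖ := by rw [hLdef]; exact norm_pos_iff.mpr h
      calc min (min (ν₀ * ‖A u - vδ‖ ^ 2 / ‖lapCLM g σ u u‖) (ν₁ / ‖lapCLM g σ u u‖)) ν₂ * ‖L‖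
          ≤ (ν₀ * ‖r‖ ^ 2 / ‖L‖) * ‖L‖ := by
            apply mul_le_mul_of_nonneg_right _ hL.le
            exact le_trans (min_le_left _ _) (min_le_left _ _)
        _ = ν₀ * ‖r‖ ^ 2 := div_mul_cancel₀ _ hL.ne'
    · simpa using by positivity
  have hAz : A (u - udag) = r + (vδ - v) := by
    rw [map_sub, hsol, hrdef]; abel
  set s := ⟪vδ - v, r⟫ with hsdef
  set t := ⟪u - udag, L⟫ with htdef
  have key : ⟪u - udag, α • adjoint A r + β • L⟫
      = α * (‖r‖ ^ 2 + s) + β * t := by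
    rw [inner_add_right, real_inner_smul_right, real_inner_smul_right,
      ContinuousLinearMap.adjoint_inner_right, hAz, inner_add_left,
      real_inner_self_eq_norm_sq]
  rw [key]
  have hsabs : |s| ≤ δ * ‖r‖ :=
    le_trans (abs_real_inner_le_norm _ _)
      (mul_le_mul_of_nonneg_right hnoise (norm_nonneg _))
  have htabs : |t| ≤ p * ‖L‖ :=
    le_trans (abs_real_inner_le_norm _ _)
      (mul_le_mul_of_nonneg_right hball (norm_nonneg _))
  have hαpos : 0 < α := lt_of_lt_of_le hηpos hα
  have h1 : η * ‖r‖ ^ 2 ≤ α * ‖r‖ ^ 2 :=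
    mul_le_mul_of_nonneg_right hα (sq_nonneg _)
  have hδr : δ * ‖r‖ ≤ ‖r‖ ^ 2 / τ := by
    rw [le_div_iff₀ hτ0]
    nlinarith [hres.le, hrpos]
  have h2 : -(η₁ / τ * ‖r‖ ^ 2) ≤ α * s := by
    have hs1 : -(δ * ‖r‖) ≤ s := neg_le_of_abs_le hsabs
    have h0 := mul_le_mul_of_nonneg_left hs1 hαpos.le
    rw [mul_neg] at h0
    have h3 : α * (δ * ‖r‖) ≤ η₁ * (‖r‖ ^ 2 / τ) := by
      have := mul_le_mul hαle hδr (by positivity) hη₁.le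
      linarith
    have : η₁ * (‖r‖ ^ 2 / τ) = η₁ / τ * ‖r‖ ^ 2 := by ring
    linarith
  have h3 : -(p * ν₀ * ‖r‖ ^ 2) ≤ β * t := by
    have ht1 : -(p * ‖L‖) ≤ t := neg_le_of_abs_le htabs
    have h4 := mul_le_mul_of_nonneg_left ht1 hβnn
    rw [mul_neg] at h4
    have h5 : β * (p * ‖L‖) ≤ p * (ν₀ * ‖r‖ ^ 2) := by
      have h6 := mul_le_mul_of_nonneg_left hβL hp.le
      have h7 : β * (p * ‖L‖) = p * (β * ‖L‖) := by ring
      linarith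
    linarith
  have expand : α * (‖r‖ ^ 2 + s) = α * ‖r‖ ^ 2 + α * s := mul_add _ _ _
  have hR : -(η - η₁ / τ - p * ν₀) * ‖r‖ ^ 2
      = -(η * ‖r‖ ^ 2) + η₁ / τ * ‖r‖ ^ 2 + p * ν₀ * ‖r‖ ^ 2 := by ring
  rw [hR]
  linarith [h1, h2, h3, expand]
end

section
/- Continuity of the adaptive gradient term under data perturbations: Let u_j → u in U and w_j → w := v in V, where Au† = v for some u† ∈ U. If Au ≠ v, then α_{w_j}(u_j)·A*(Au_j − w_j) → α_v(u)·A*(Au − v) as j → ∞ (in particular A*(Au − v) ≠ 0, so α_v(u) equals the min expression). If instead Au = v, then α_{w_j}(u_j)·A*(Au_j − w_j) → 0 as j → ∞. -/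
open scoped BigOperators RealInnerProductSpace Classical
open ContinuousLinearMap Filter

/-- Continuity of the adaptive gradient term under data perturbations. -/
theorem stmt19 (n m : ℕ)
    (A : EuclideanSpace ℝ (Fin n) →L[ℝ] EuclideanSpace ℝ (Fin m))
    (η₀ η₁ : ℝ) (hη₀ : 0 < η₀) (hη₁ : 0 < η₁)
    (udag : EuclideanSpace ℝ (Fin n)) (v : EuclideanSpace ℝ (Fin m)) (hsol : A udag = v)
    (u : EuclideanSpace ℝ (Fin n)) (uj : ℕ → EuclideanSpace ℝ (Fin n))
    (huj : Tendsto uj atTop (nhds u))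
    (wj : ℕ → EuclideanSpace ℝ (Fin m)) (hwj : Tendsto wj atTop (nhds v)) :
    (A u ≠ v → adjoint A (A u - v) ≠ 0 ∧
      Tendsto (fun j => alphaStep A η₀ η₁ (wj j) (uj j) • adjoint A (A (uj j) - wj j))
        atTop (nhds (alphaStep A η₀ η₁ v u • adjoint A (A u - v)))) ∧
    (A u = v →
      Tendsto (fun j => alphaStep A η₀ η₁ (wj j) (uj j) • adjoint A (A (uj j) - wj j))
        atTop (nhds 0)) := by
  have hf : Tendsto (fun j => A (uj j) - wj j) atTop (nhds (A u - v)) :=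
    ((A.continuous.tendsto u).comp huj).sub hwj
  have hg : Tendsto (fun j => adjoint A (A (uj j) - wj j)) atTop
      (nhds (adjoint A (A u - v))) :=
    ((adjoint A).continuous.tendsto _).comp hf
  have halpha_mem : ∀ (w : EuclideanSpace ℝ (Fin m)) (x : EuclideanSpace ℝ (Fin n)),
      0 ≤ alphaStep A η₀ η₁ w x ∧ alphaStep A η₀ η₁ w x ≤ η₁ := by
    intro w x
    unfold alphaStep
    split_ifs with h
    · constructor
      · exact le_min (div_nonneg (mul_nonneg hη₀.le (sq_nonneg _)) (sq_nonneg _)) hη₁.le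
      · exact min_le_right _ _
    · exact ⟨hη₁.le, le_rfl⟩
  constructor
  · intro hne
    have hz : adjoint A (A u - v) ≠ 0 := by
      intro h0
      have h1 : ⟪adjoint A (A u - v), u - udag⟫ = ⟪A u - v, A (u - udag)⟫ :=
        ContinuousLinearMap.adjoint_inner_left A _ _
      rw [h0, inner_zero_left] at h1
      have h2 : A (u - udag) = A u - v := by rw [map_sub, hsol]
      rw [h2, real_inner_self_eq_norm_sq] at h1
      have : A u - v = 0 := by
        have h3 : ‖A u - v‖ ^ 2 = 0 := h1.symm
        have := (pow_eq_zero_iff (n := 2) (by norm_num)).mp h3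
        exact norm_eq_zero.mp this
      exact hne (sub_eq_zero.mp this)
    refine ⟨hz, ?_⟩
    have hznorm : (0:ℝ) < ‖adjoint A (A u - v)‖ := norm_pos_iff.mpr hz
    have hev : ∀ᶠ j in atTop, adjoint A (A (uj j) - wj j) ≠ 0 := by
      have := hg.eventually (eventually_ne_nhds hz)
      exact this
    have halpha : Tendsto (fun j => alphaStep A η₀ η₁ (wj j) (uj j)) atTop
        (nhds (alphaStep A η₀ η₁ v u)) := by
      have hlim : Tendsto (fun j =>
          min (η₀ * ‖A (uj j) - wj j‖ ^ 2 / ‖adjoint A (A (uj j) - wj j)‖ ^ 2) η₁) atTop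
          (nhds (min (η₀ * ‖A u - v‖ ^ 2 / ‖adjoint A (A u - v)‖ ^ 2) η₁)) := by
        apply Tendsto.min _ tendsto_const_nhds
        apply Tendsto.div
        · exact (tendsto_const_nhds.mul ((hf.norm).pow 2))
        · exact (hg.norm).pow 2
        · positivity
      have heq : (fun j => alphaStep A η₀ η₁ (wj j) (uj j)) =ᶠ[atTop]
          (fun j => min (η₀ * ‖A (uj j) - wj j‖ ^ 2 / ‖adjoint A (A (uj j) - wj j)‖ ^ 2) η₁) := by
        filter_upwards [hev] with j hj
        unfold alphaStep
        rw [if_pos hj]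
      rw [show alphaStep A η₀ η₁ v u =
          min (η₀ * ‖A u - v‖ ^ 2 / ‖adjoint A (A u - v)‖ ^ 2) η₁ by
        unfold alphaStep; rw [if_pos hz]]
      exact hlim.congr' heq.symm
    exact halpha.smul hg
  · intro heq
    have hg0 : Tendsto (fun j => adjoint A (A (uj j) - wj j)) atTop (nhds 0) := by
      have : adjoint A (A u - v) = 0 := by rw [heq, sub_self, map_zero]
      rwa [this] at hg
    apply squeeze_zero_norm (a := fun j => η₁ * ‖adjoint A (A (uj j) - wj j)‖)
    · intro j
      rw [norm_smul]
      apply mul_le_mul_of_nonneg_right _ (norm_nonneg _)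
      rw [Real.norm_eq_abs, abs_of_nonneg (halpha_mem _ _).1]
      exact (halpha_mem _ _).2
    · have : Tendsto (fun j => η₁ * ‖adjoint A (A (uj j) - wj j)‖) atTop (nhds (η₁ * 0)) :=
        tendsto_const_nhds.mul (by simpa using hg0.norm)
      simpa using this
end
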